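/- Let J ⊆ [n], η < 1/2, and let D = (1−2η)·P + 2η·U_n where P is the uniform distribution on {x : χ_J(x) = 1} (J ≠ ∅) and U_n is uniform on {±1}^n. Fix j ∈ J. Define a random pair (x, y): sample z ∼ D, let b ∈ {0,1} be an independent fair coin, set x = z ⊕ b·e_j (flip the j-th coordinate of z iff b = 1) and y = (−1)^b. Then: (i) x is uniformly distributed on {±1}^n; (ii) conditioned on x, the label y equals χ_J(x) with probability 1−η and −χ_J(x) with probability η. -/
import Mathlib


open Finset
open scoped Classical

/-- χ_A(x) for x in the Boolean cube, identifying `false ↦ 1` and `true ↦ -1`. -/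
noncomputable def chi {α : Type*} (A : Finset α) (x : α → Bool) : ℝ :=
  ∏ i ∈ A, (if x i then (-1 : ℝ) else 1)

/-- Flip coordinate `j` of `x`. -/
def flipCoord {n : ℕ} (j : Fin n) (x : Fin n → Bool) : Fin n → Bool :=
  Function.update x j (!(x j))

lemma chi_pm {α : Type*} (A : Finset α) (x : α → Bool) : chi A x = 1 ∨ chi A x = -1 := by
  unfold chi
  refine Finset.induction_on A (by simp) ?_
  intro a s ha ih
  rw [Finset.prod_insert ha]
  rcases ih with h1 | h1 <;> rw [h1] <;> by_cases hx : x a <;> simp [hx]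

lemma chi_flip {n : ℕ} (J : Finset (Fin n)) (j : Fin n) (hj : j ∈ J) (x : Fin n → Bool) :
    chi J (flipCoord j x) = - chi J x := by
  unfold chi flipCoord
  rw [← Finset.mul_prod_erase J _ hj, ← Finset.mul_prod_erase J _ hj]
  have h1 : ∏ i ∈ J.erase j, (if Function.update x j (!(x j)) i then (-1:ℝ) else 1)
      = ∏ i ∈ J.erase j, (if x i then (-1:ℝ) else 1) := by
    apply Finset.prod_congr rfl
    intro i hi
    rw [Function.update_of_ne (Finset.ne_of_mem_erase hi)]
  rw [h1, Function.update_self]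
  by_cases hx : x j <;> simp [hx] <;> ring

/-- Let `D = (1−2η)·P + 2η·U_n` with `P` uniform on `{x : χ_J(x)=1}`, `j ∈ J`.
Sample `z ∼ D`, flipCoord coordinate `j` with probability `1/2` to get `x`, and let
`y = −1` iff the flipCoord occurred. Then (i) `x` is uniform, and (ii) conditioned on `x`,
`y = χ_J(x)` with probability `1−η` (stated as `Pr[x = x₀ ∧ y = χ_J(x₀)] = (1−η)·2^{−n}`). -/
theorem stmt16 (n : ℕ) (J : Finset (Fin n)) (hJ : J.Nonempty) (j : Fin n) (hj : j ∈ J)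
    (η : ℝ) (hη0 : 0 ≤ η) (hη : η < 1 / 2)
    (D : (Fin n → Bool) → ℝ)
    (hD : ∀ x, D x = (1 - 2 * η) * (if chi J x = 1 then 2 * ((2 : ℝ) ^ n)⁻¹ else 0)
        + 2 * η * ((2 : ℝ) ^ n)⁻¹) :
    (∀ x₀ : Fin n → Bool,
        (1 / 2) * D x₀ + (1 / 2) * D (flipCoord j x₀) = ((2 : ℝ) ^ n)⁻¹) ∧
    (∀ x₀ : Fin n → Bool,
        (1 / 2) * (if chi J x₀ = 1 then D x₀ else 0) +
          (1 / 2) * (if chi J x₀ = -1 then D (flipCoord j x₀) else 0) =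
        (1 - η) * ((2 : ℝ) ^ n)⁻¹) := by
  have hpow : ((2:ℝ)^n) ≠ 0 := by positivity
  constructor <;> intro x₀ <;>
  · have hflip := chi_flip J j hj x₀
    rw [hD x₀, hD (flipCoord j x₀), hflip]
    rcases chi_pm J x₀ with h | h <;> rw [h] <;> norm_num <;> field_simp <;> ring
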